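/- For a random walk 𝒜_n with i.i.d. nonnegative increments A_k having E[A_1] < c for some c > 0, the probability that ∃n ≥ 1 with 𝒜_n > x + cn tends to 0 as x → ∞. -/

import Mathlib

/-! By the strong law of large numbers `(𝒜ₙ - c n) / n → E[A₀] - c < 0` almost surely, so
`sup_n (𝒜ₙ - c n)` is almost surely finite. The crossing events decrease as `x` grows and their
intersection is contained in the null event where this supremum is infinite. -/

open MeasureTheory ProbabilityTheory Filter Topology

theorem bddAbove_range_sub_mul_of_tendsto_div {s : ℕ → ℝ} {L c : ℝ}
    (hs : Tendsto (fun n : ℕ => s n / n) atTop (𝓝 L)) (hL : L < c) :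
    BddAbove (Set.range fun n : ℕ => s n - c * n) := by
  refine IsBoundedUnder.bddAbove_range (isBoundedUnder_of_eventually_le (a := 0) ?_)
  filter_upwards [hs.eventually_lt_const hL, eventually_gt_atTop 0] with n hn hpos
  have : s n < c * n := (div_lt_iff₀ (by exact_mod_cast hpos)).1 hn
  linarith

theorem tendsto_measure_exists_lt_of_ae_bddAbove {Ω ι : Type*} [MeasurableSpace Ω] [Countable ι]
    {μ : Measure Ω} [IsFiniteMeasure μ] {f : ι → Ω → ℝ} (hf : ∀ i, AEMeasurable (f i) μ)
    (hbdd : ∀ᵐ ω ∂μ, BddAbove (Set.range fun i => f i ω)) :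
    Tendsto (fun x : ℝ => μ {ω | ∃ i, x < f i ω}) atTop (𝓝 0) := by
  have hmeas (x : ℝ) : NullMeasurableSet {ω | ∃ i, x < f i ω} μ := by
    simpa only [Set.ofPred_exists] using
      NullMeasurableSet.iUnion fun i => nullMeasurableSet_lt aemeasurable_const (hf i)
  have hanti : Antitone fun x : ℝ => {ω | ∃ i, x < f i ω} :=
    fun x y hxy ω ⟨i, hi⟩ => ⟨i, hxy.trans_lt hi⟩
  have hnull : μ (⋂ x : ℝ, {ω | ∃ i, x < f i ω}) = 0 := by
    rw [measure_eq_zero_iff_ae_notMem]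
    filter_upwards [hbdd] with ω ⟨B, hB⟩ hω
    obtain ⟨i, hi⟩ := Set.mem_iInter.1 hω B
    exact hi.not_ge (hB ⟨i, rfl⟩)
  rw [← hnull]
  exact tendsto_measure_iInter_atTop hmeas hanti ⟨0, measure_ne_top μ _⟩

theorem crossing_linear_barrier_tendsto_zero_general {Ω : Type*} [MeasurableSpace Ω]
    (μ : Measure Ω) [IsProbabilityMeasure μ] (A : ℕ → Ω → ℝ) (c : ℝ)
    (hindep : iIndepFun A μ)
    (hident : ∀ i, IdentDistrib (A i) (A 0) μ μ)
    (hint : Integrable (A 0) μ) (hmean : ∫ ω, A 0 ω ∂μ < c) :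
    Tendsto (fun x : ℝ =>
        (μ {ω | ∃ n, 1 ≤ n ∧ x + c * n < ∑ k ∈ Finset.range n, A k ω}).toReal)
      atTop (nhds 0) := by
  set M : ℕ → Ω → ℝ := fun n ω => ∑ k ∈ Finset.range n, A k ω - c * n
  have hM_meas (n : ℕ) : AEMeasurable (M n) μ :=
    (Finset.aemeasurable_fun_sum _ fun k _ => (hident k).aemeasurable_fst).sub_const _
  have hM_bdd : ∀ᵐ ω ∂μ, BddAbove (Set.range fun n => M n ω) := by
    filter_upwards [strong_law_ae_real A hint (fun i j hij => hindep.indepFun hij) hident]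
      with ω hω using bddAbove_range_sub_mul_of_tendsto_div hω hmean
  have hsub (x : ℝ) : {ω | ∃ n, 1 ≤ n ∧ x + c * n < ∑ k ∈ Finset.range n, A k ω} ⊆
      {ω | ∃ n, x < M n ω} := fun ω ⟨n, _, hn⟩ => ⟨n, by simp only [M]; linarith⟩
  refine (ENNReal.tendsto_toReal ENNReal.zero_ne_top).comp <|
    tendsto_of_tendsto_of_tendsto_of_le_of_le tendsto_const_nhds
      (tendsto_measure_exists_lt_of_ae_bddAbove hM_meas hM_bdd) (fun _ => zero_le)
      fun x => measure_mono (hsub x)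

/-- For i.i.d. nonnegative increments with mean less than `c`, the probability that
the walk ever crosses the linear barrier `x + c n` tends to `0` as `x → ∞`. -/
theorem crossing_linear_barrier_tendsto_zero {Ω : Type*} [MeasurableSpace Ω]
    (μ : Measure Ω) [IsProbabilityMeasure μ] (A : ℕ → Ω → ℝ) (c : ℝ)
    (hmeas : ∀ i, Measurable (A i)) (hnonneg : ∀ i ω, 0 ≤ A i ω)
    (hindep : iIndepFun A μ)
    (hident : ∀ i, IdentDistrib (A i) (A 0) μ μ)
    (hint : Integrable (A 0) μ) (hmean : ∫ ω, A 0 ω ∂μ < c) :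
    Tendsto (fun x : ℝ =>
        (μ {ω | ∃ n, 1 ≤ n ∧ x + c * n < ∑ k ∈ Finset.range n, A k ω}).toReal)
      atTop (nhds 0) :=
  crossing_linear_barrier_tendsto_zero_general μ A c hindep hident hint hmean
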